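/- arXiv:1902.06045 — 2 statements merged into one kernel-verified Lean document; each statement's English description precedes it below -/
import Mathlib

section
/- Let Θ : ℝ¹⁰ → ℝ be a smooth function of (x¹,…,x⁵,y¹,…,y⁵) and set ω_{ik} = Θ_{x^i y^k} − Θ_{x^k y^i}. Then, with ε^{iklm} the Levi-Civita symbol on four indices and all sums over i,k,l,m from 1 to 4, the identity Σ_l ∂_{x^l}[ Σ_{i,k,m} ε^{iklm} ω_{ik} (Θ_{x^m y⁵} − Θ_{x⁵ y^m}) ] = −(1/4) ∂_{x⁵}( Σ ε^{iklm} ω_{ik} ω_{lm} ) holds at every point of ℝ¹⁰. -/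
noncomputable section

/-- Partial derivative of `f : ℝⁿ → ℝ` in the `i`-th coordinate direction. -/
def pd {n : ℕ} (i : Fin n) (f : (Fin n → ℝ) → ℝ) : (Fin n → ℝ) → ℝ :=
  fun p => fderiv ℝ f p (Pi.single i 1)

/-- `∂/∂x^i` on functions of `(x¹,…,x⁵,y¹,…,y⁵) ∈ ℝ¹⁰`. -/
def px5 (i : Fin 5) (f : (Fin 10 → ℝ) → ℝ) : (Fin 10 → ℝ) → ℝ :=
  pd ⟨i.val, by omega⟩ f

/-- `∂/∂y^i` on functions of `(x¹,…,x⁵,y¹,…,y⁵) ∈ ℝ¹⁰`. -/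
def py5 (i : Fin 5) (f : (Fin 10 → ℝ) → ℝ) : (Fin 10 → ℝ) → ℝ :=
  pd ⟨i.val + 5, by omega⟩ f

/-- Levi-Civita symbol on indices `1,…,4`. -/
def eps4 (i k l m : Fin 4) : ℝ :=
  Matrix.det (Matrix.of fun r c : Fin 4 => if (![i, k, l, m]) r = c then (1 : ℝ) else 0)

/-- `ω_{ik} = Θ_{x^i y^k} − Θ_{x^k y^i}` for `i,k = 1,…,5`. -/
def omg5 (Θ : (Fin 10 → ℝ) → ℝ) (i k : Fin 5) : (Fin 10 → ℝ) → ℝ :=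
  fun p => px5 i (py5 k Θ) p - px5 k (py5 i Θ) p

/-- The embedding of the indices `1,…,4` into `1,…,5`. -/
def e45 (i : Fin 4) : Fin 5 := i.castSucc

/-!
Put `α_k = Θ_{y^k}`, so that `ω_{ik} = ∂_i α_k − ∂_k α_i` is the exterior derivative of `α` in
the `x`-variables. By the Leibniz rule the left side is
`ε^{iklm} (∂_l ω_{ik}) ω_{m5} + ε^{iklm} ω_{ik} (∂_l ∂_m α_5 − ∂_5 ∂_l α_m)`.
The first term vanishes by the Bianchi identity `dω = 0`, and so does the part with
`∂_l ∂_m α_5`: in both, third derivatives, which are symmetric, are contracted against the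
antisymmetric `ε`. Using `ε^{iklm} = ε^{lmik}` and the antisymmetry in `l, m`, the right side
reduces to the same `−ε^{iklm} ω_{ik} ∂_5 ∂_l α_m`. Every cancellation is an instance of
`∑_v ε(v) T(v ∘ σ) = sgn σ ∑_v ε(v) T(v)`.
-/

def leviCivita {n : ℕ} (v : Fin n → Fin n) : ℝ :=
  Matrix.det (Matrix.of fun r c : Fin n => if v r = c then (1 : ℝ) else 0)

theorem eps4_eq_leviCivita (i k l m : Fin 4) : eps4 i k l m = leviCivita ![i, k, l, m] := rfl

theorem leviCivita_comp_perm {n : ℕ} (v : Fin n → Fin n) (σ : Equiv.Perm (Fin n)) :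
    leviCivita (v ∘ σ) = Equiv.Perm.sign σ * leviCivita v :=
  Matrix.det_permute σ (Matrix.of fun r c : Fin n => if v r = c then (1 : ℝ) else 0)

theorem sum_leviCivita_mul_comp_perm {n : ℕ} (T : (Fin n → Fin n) → ℝ)
    (σ : Equiv.Perm (Fin n)) :
    ∑ v, leviCivita v * T (v ∘ σ) = Equiv.Perm.sign σ * ∑ v, leviCivita v * T v := by
  have hreindex : ∑ v, leviCivita (v ∘ σ) * T (v ∘ σ) = ∑ v, leviCivita v * T v :=
    Fintype.sum_equiv (Equiv.arrowCongr σ.symm (Equiv.refl _)) _ _ fun _ => rfl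
  simp only [leviCivita_comp_perm, mul_assoc, ← Finset.mul_sum] at hreindex
  rw [← hreindex, ← mul_assoc, ← Int.cast_mul, ← Units.val_mul, Int.units_mul_self,
    Units.val_one, Int.cast_one, one_mul]

theorem sum_leviCivita_mul_eq_zero_of_swap {n : ℕ} {T : (Fin n → Fin n) → ℝ} {a b : Fin n}
    (hab : a ≠ b) (hT : ∀ v, T (v ∘ Equiv.swap a b) = T v) :
    ∑ v, leviCivita v * T v = 0 := by
  have h := sum_leviCivita_mul_comp_perm T (Equiv.swap a b)
  simp only [hT, Equiv.Perm.sign_swap hab, Units.val_neg, Units.val_one, Int.cast_neg,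
    Int.cast_one, neg_one_mul] at h
  linarith

theorem sum_fin_succ_pi {α M : Type*} [Fintype α] [AddCommMonoid M] {n : ℕ}
    (f : (Fin (n + 1) → α) → M) : ∑ v, f v = ∑ a, ∑ v, f (Fin.cons a v) := by
  rw [← Fintype.sum_prod_type']
  exact (Fintype.sum_equiv (Fin.consEquiv fun _ => α) _ _ fun _ => rfl).symm

theorem sum_fin_four_pi {α M : Type*} [Fintype α] [AddCommMonoid M] (f : (Fin 4 → α) → M) :
    ∑ v, f v = ∑ i, ∑ k, ∑ l, ∑ m, f ![i, k, l, m] := by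
  simp only [sum_fin_succ_pi, Fintype.sum_unique]
  rfl

theorem sum_rotate {α M : Type*} [Fintype α] [AddCommMonoid M] (f : α → α → α → α → M) :
    ∑ l, ∑ i, ∑ k, ∑ m, f i k l m = ∑ i, ∑ k, ∑ l, ∑ m, f i k l m := by
  rw [Finset.sum_comm]
  exact Finset.sum_congr rfl fun _ _ => Finset.sum_comm

/-- In the application `H c a b = ∂_c ∂_a α_b`, `K l m = ∂_l ∂_m α_5`, `G l m = ∂_5 ∂_l α_m`,
`w = ω` and `w5 m = ω_{m5}`. -/
theorem eps4_contraction_identity (H : Fin 4 → Fin 4 → Fin 4 → ℝ) (K G w : Fin 4 → Fin 4 → ℝ)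
    (w5 : Fin 4 → ℝ) (hH : ∀ c a b, H c a b = H a c b) (hK : ∀ a b, K a b = K b a) :
    ∑ l, ∑ i, ∑ k, ∑ m, (eps4 i k l m * (H l i k - H l k i) * w5 m +
        eps4 i k l m * w i k * (K l m - G l m)) =
      -(1 / 4) * ∑ i, ∑ k, ∑ l, ∑ m, (eps4 i k l m * (G i k - G k i) * w l m +
        eps4 i k l m * w i k * (G l m - G m l)) := by
  have bianchi₁ : ∑ v, leviCivita v * (H (v 2) (v 0) (v 1) * w5 (v 3)) = 0 :=
    sum_leviCivita_mul_eq_zero_of_swap (a := 0) (b := 2) (by decide) fun v => by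
      simp [Equiv.swap_apply_of_ne_of_ne, hH (v 0)]
  have bianchi₂ : ∑ v, leviCivita v * (H (v 2) (v 1) (v 0) * w5 (v 3)) = 0 :=
    sum_leviCivita_mul_eq_zero_of_swap (a := 1) (b := 2) (by decide) fun v => by
      simp [Equiv.swap_apply_of_ne_of_ne, hH (v 1)]
  have hK_contr : ∑ v, leviCivita v * (w (v 0) (v 1) * K (v 2) (v 3)) = 0 :=
    sum_leviCivita_mul_eq_zero_of_swap (a := 2) (b := 3) (by decide) fun v => by
      simp [Equiv.swap_apply_of_ne_of_ne, hK (v 3)]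
  have swap_lm := sum_leviCivita_mul_comp_perm
    (fun v => w (v 0) (v 1) * G (v 2) (v 3)) (Equiv.swap 2 3)
  have swap_pairs := sum_leviCivita_mul_comp_perm
    (fun v => w (v 0) (v 1) * G (v 2) (v 3)) (Equiv.swap 0 2 * Equiv.swap 1 3)
  have swap_ik := sum_leviCivita_mul_comp_perm
    (fun v => G (v 0) (v 1) * w (v 2) (v 3)) (Equiv.swap 0 1)
  simp only [Function.comp_apply, Fin.isValue, ne_eq, Fin.reduceEq, not_false_eq_true,
    Equiv.swap_apply_of_ne_of_ne, Equiv.swap_apply_left, Equiv.swap_apply_right,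
    Equiv.Perm.sign_swap', ↓reduceIte, Units.val_neg, Units.val_one, Int.reduceNeg, Int.cast_neg,
    Int.cast_one, neg_mul, one_mul, Equiv.Perm.coe_mul, zero_ne_one, one_ne_zero,
    Equiv.Perm.sign_mul, mul_neg, mul_one, neg_neg] at swap_lm swap_pairs swap_ik
  simp only [sum_fin_four_pi, ← eps4_eq_leviCivita, Matrix.cons_val]
    at bianchi₁ bianchi₂ hK_contr swap_lm swap_pairs swap_ik
  conv_lhs => rw [sum_rotate]
  simp only [mul_sub, mul_add, Finset.sum_add_distrib, Finset.sum_sub_distrib, mul_comm,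
    mul_left_comm] at bianchi₁ bianchi₂ hK_contr swap_lm swap_pairs swap_ik ⊢
  linear_combination bianchi₁ - bianchi₂ + hK_contr - (1 / 4) * swap_lm + (1 / 2) * swap_pairs
    - (1 / 4) * swap_ik

section PartialDerivatives

variable {n : ℕ} {p : Fin n → ℝ} {f g : (Fin n → ℝ) → ℝ}

theorem ContDiff.pd {k m : WithTop ℕ∞} (hf : ContDiff ℝ k f) (hmk : m + 1 ≤ k) (i : Fin n) :
    ContDiff ℝ m (pd i f) :=
  (hf.fderiv_right hmk).clm_apply contDiff_const

theorem pd_const (i : Fin n) (c : ℝ) : pd i (fun _ => c) p = 0 := by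
  simp [pd]

theorem pd_sub (i : Fin n) (hf : DifferentiableAt ℝ f p) (hg : DifferentiableAt ℝ g p) :
    pd i (fun q => f q - g q) p = pd i f p - pd i g p := by
  simp [pd, fderiv_fun_sub hf hg]

theorem pd_mul (i : Fin n) (hf : DifferentiableAt ℝ f p) (hg : DifferentiableAt ℝ g p) :
    pd i (fun q => f q * g q) p = pd i f p * g p + f p * pd i g p := by
  simp [pd, fderiv_fun_mul hf hg]
  ring

theorem pd_sum {ι : Type*} (i : Fin n) (s : Finset ι) {F : ι → (Fin n → ℝ) → ℝ}
    (hF : ∀ j ∈ s, DifferentiableAt ℝ (F j) p) :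
    pd i (fun q => ∑ j ∈ s, F j q) p = ∑ j ∈ s, pd i (F j) p := by
  simp [pd, fderiv_fun_sum hF]

theorem pd_pd_comm (hf : ContDiff ℝ 2 f) (i j : Fin n) (p : Fin n → ℝ) :
    pd i (pd j f) p = pd j (pd i f) p := by
  have hd : DifferentiableAt ℝ (fderiv ℝ f) p :=
    (hf.fderiv_right (m := 1) le_rfl).differentiable one_ne_zero p
  have hpd : ∀ a b : Fin n,
      pd a (pd b f) p = fderiv ℝ (fderiv ℝ f) p (Pi.single a 1) (Pi.single b 1) := by
    intro a b
    change fderiv ℝ (fun q => fderiv ℝ f q (Pi.single b 1)) p (Pi.single a 1) = _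
    simp [fderiv_clm_apply hd (differentiableAt_const _)]
  rw [hpd, hpd, (hf.contDiffAt.isSymmSndFDerivAt (by simp)).eq]

end PartialDerivatives

/-- `omg5 Θ` is `curl (fun a => ⟨a, _⟩) (fun b => py5 b Θ)` definitionally. -/
def curl {n : ℕ} (x : Fin 5 → Fin n) (α : Fin 5 → (Fin n → ℝ) → ℝ) (a b : Fin 5) :
    (Fin n → ℝ) → ℝ :=
  fun q => pd (x a) (α b) q - pd (x b) (α a) q

theorem sum_pd_eps4_curl_mul_curl {n : ℕ} (x : Fin 5 → Fin n) (α : Fin 5 → (Fin n → ℝ) → ℝ)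
    (hα : ∀ b, ContDiff ℝ 2 (α b)) (p : Fin n → ℝ) :
    ∑ l : Fin 4, pd (x (e45 l))
        (fun q => ∑ i, ∑ k, ∑ m, eps4 i k l m * curl x α (e45 i) (e45 k) q *
          curl x α (e45 m) (Fin.last 4) q) p =
      -(1 / 4) * pd (x (Fin.last 4))
        (fun q => ∑ i, ∑ k, ∑ l, ∑ m,
          eps4 i k l m * curl x α (e45 i) (e45 k) q * curl x α (e45 l) (e45 m) q) p := by
  have hdα : ∀ a b, Differentiable ℝ (pd (x a) (α b)) := fun a b =>
    ((hα b).pd (m := 1) (by norm_num) _).differentiable one_ne_zero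
  have hcurl : ∀ a b, Differentiable ℝ (curl x α a b) := fun a b => (hdα a b).sub (hdα b a)
  set H : Fin 5 → Fin 5 → Fin 5 → ℝ := fun c a b => pd (x c) (pd (x a) (α b)) p
  have hpd_curl : ∀ c a b, pd (x c) (curl x α a b) p = H c a b - H c b a := fun c a b =>
    pd_sub _ (hdα a b p) (hdα b a p)
  have hH : ∀ c a b, H c a b = H a c b := fun c a b => pd_pd_comm (hα b) _ _ p
  simp (disch := fun_prop) only [pd_sum, pd_mul, pd_const, zero_mul, zero_add, hpd_curl,
    hH _ (Fin.last 4)]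
  exact eps4_contraction_identity (fun c a b => H (e45 c) (e45 a) (e45 b))
    (fun l m => H (e45 l) (e45 m) (Fin.last 4)) (fun l m => H (Fin.last 4) (e45 l) (e45 m))
    (fun i k => curl x α (e45 i) (e45 k) p) (fun m => curl x α (e45 m) (Fin.last 4) p)
    (fun _ _ _ => hH _ _ _) (fun _ _ => hH _ _ _)

/-- the identity
`Σ_l ∂_{x^l}[ Σ_{i,k,m} ε^{iklm} ω_{ik} (Θ_{x^m y⁵} − Θ_{x⁵ y^m}) ]
  = −(1/4) ∂_{x⁵}( Σ ε^{iklm} ω_{ik} ω_{lm} )`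
holds at every point of `ℝ¹⁰` (sums over `i,k,l,m` from 1 to 4). -/
theorem stmt11 (Θ : (Fin 10 → ℝ) → ℝ) (hΘ : ContDiff ℝ (⊤ : ℕ∞) Θ) :
    ∀ pt : Fin 10 → ℝ,
      ∑ l : Fin 4, px5 (e45 l)
          (fun q => ∑ i, ∑ k, ∑ m, eps4 i k l m * omg5 Θ (e45 i) (e45 k) q *
            (px5 (e45 m) (py5 (Fin.last 4) Θ) q - px5 (Fin.last 4) (py5 (e45 m) Θ) q)) pt =
        -(1 / 4) * px5 (Fin.last 4)
          (fun q => ∑ i, ∑ k, ∑ l, ∑ m,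
            eps4 i k l m * omg5 Θ (e45 i) (e45 k) q * omg5 Θ (e45 l) (e45 m) q) pt :=
  sum_pd_eps4_curl_mul_curl (fun a => ⟨a.val, by omega⟩) (fun b => py5 b Θ)
    (fun _ => hΘ.pd (WithTop.coe_le_coe.2 le_top) _)
end
end

section
/- (Boyer–Finley equation.) Let p, φ : ℝ³ → ℝ be smooth functions of (y¹,y³,y⁴) and set q = −e^{φ}. If the system p_{y⁴} + q_{y¹} = 0 and q_{y³} = p_{y¹} q holds at every point of ℝ³, then φ satisfies the Boyer–Finley equation φ_{y³y⁴} = (e^{φ})_{y¹y¹} at every point of ℝ³. -/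
/-!
Since `q = -e^φ` never vanishes, `q_{y³} = p_{y¹} q` says `φ_{y³} = p_{y¹}`, and
`p_{y⁴} + q_{y¹} = 0` says `p_{y⁴} = (e^φ)_{y¹}`. Symmetry of mixed partials then gives
`φ_{y³y⁴} = p_{y¹y⁴} = (e^φ)_{y¹y¹}`.
-/

noncomputable section

lemma pd_pd_eq_fderiv_fderiv {n : ℕ} (i j : Fin n) {f : (Fin n → ℝ) → ℝ} {v : Fin n → ℝ}
    (hf : DifferentiableAt ℝ (fderiv ℝ f) v) :
    pd i (pd j f) v = fderiv ℝ (fderiv ℝ f) v (Pi.single i 1) (Pi.single j 1) := by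
  change fderiv ℝ (fun w => fderiv ℝ f w (Pi.single j 1)) v (Pi.single i 1) = _
  simp [fderiv_clm_apply hf (differentiableAt_const _)]

lemma pd_comm {n : ℕ} (i j : Fin n) {f : (Fin n → ℝ) → ℝ} (hf : ContDiff ℝ 2 f)
    (v : Fin n → ℝ) : pd i (pd j f) v = pd j (pd i f) v := by
  have hf' : Differentiable ℝ (fderiv ℝ f) := hf.fderiv_right le_rfl |>.differentiable one_ne_zero
  rw [pd_pd_eq_fderiv_fderiv i j (hf' v), pd_pd_eq_fderiv_fderiv j i (hf' v)]
  exact hf.contDiffAt.isSymmSndFDerivAt (by simp) _ _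

lemma pd_neg {n : ℕ} (i : Fin n) (f : (Fin n → ℝ) → ℝ) (v : Fin n → ℝ) :
    pd i (fun w => -f w) v = -pd i f v := by
  simp [pd, fderiv_fun_neg]

lemma pd_exp {n : ℕ} (i : Fin n) {φ : (Fin n → ℝ) → ℝ} {v : Fin n → ℝ}
    (hφ : DifferentiableAt ℝ φ v) :
    pd i (fun w => Real.exp (φ w)) v = Real.exp (φ v) * pd i φ v := by
  simp [pd, fderiv_exp hφ]

/-- Boyer–Finley equation: if `q = −e^{φ}` and the system
`p_{y⁴} + q_{y¹} = 0`, `q_{y³} = p_{y¹} q` holds at every point of `ℝ³` (variables ordered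
`(y¹,y³,y⁴)`), then `φ_{y³y⁴} = (e^{φ})_{y¹y¹}` at every point of `ℝ³`. -/
theorem stmt16 (p φ : (Fin 3 → ℝ) → ℝ) (hp : ContDiff ℝ (⊤ : ℕ∞) p)
    (hφ : ContDiff ℝ (⊤ : ℕ∞) φ)
    (hsys : ∀ v : Fin 3 → ℝ,
      pd 2 p v + pd 0 (fun w => -Real.exp (φ w)) v = 0 ∧
      pd 1 (fun w => -Real.exp (φ w)) v = pd 0 p v * (-Real.exp (φ v))) :
    ∀ v : Fin 3 → ℝ, pd 1 (pd 2 φ) v = pd 0 (pd 0 (fun w => Real.exp (φ w))) v := by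
  have hp₂ : ContDiff ℝ 2 p := hp.of_le (WithTop.coe_le_coe.mpr le_top)
  have hφ₂ : ContDiff ℝ 2 φ := hφ.of_le (WithTop.coe_le_coe.mpr le_top)
  have hφ₁ : Differentiable ℝ φ := hφ₂.differentiable two_ne_zero
  have h_y3 : pd 1 φ = pd 0 p := funext fun v => by
    have h := (hsys v).2
    rw [pd_neg, pd_exp 1 (hφ₁ v)] at h
    exact mul_left_cancel₀ (Real.exp_pos (φ v)).ne' (by linarith)
  have h_y4 : pd 2 p = pd 0 (fun w => Real.exp (φ w)) := funext fun v => by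
    have h := (hsys v).1
    rw [pd_neg, pd_exp 0 (hφ₁ v)] at h
    rw [pd_exp 0 (hφ₁ v)]
    linarith
  intro v
  calc pd 1 (pd 2 φ) v = pd 2 (pd 1 φ) v := pd_comm 1 2 hφ₂ v
    _ = pd 0 (pd 2 p) v := by rw [h_y3, pd_comm 2 0 hp₂]
    _ = pd 0 (pd 0 (fun w => Real.exp (φ w))) v := by rw [h_y4]
end
end
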